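/- arXiv:2504.17594 — 2 statements merged into one kernel-verified Lean document; each statement's English description precedes it below -/
import Mathlib

section
/- Let D be an orthogonal d×d real matrix, q ∈ (ℤ_{>0})^d, Ω₀ = {x ∈ ℤ^d : 0 ≤ x_i ≤ 255}, and define the JPEG transform T(x) = clamp(round(Dᵀ·[Dx]_q), 0, 255) applied coordinatewise, where [·]_q is coordinatewise quantization. For x_t ∈ Ω₀ with x_{t+1} = T(x_t), define ε_t = ‖Dx_t - [Dx_t]_q‖ and η_{t+1} = ‖Dx_{t+1} - [Dx_t]_q‖. Then η_{t+1} ≤ ε_t. -/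
open Matrix

/-- Coordinatewise quantization with steps `q`. -/
noncomputable def quantVec (d : ℕ) (q : Fin d → ℤ) (y : Fin d → ℝ) : Fin d → ℝ :=
  fun i => (q i : ℝ) * ((⌊y i / (q i : ℝ) + 1/2⌋ : ℤ) : ℝ)

/-- The JPEG transform `T(x) = clamp(round(Dᵀ·[Dx]_q), 0, 255)` on integer pixel blocks. -/
noncomputable def jpegT (d : ℕ) (D : Matrix (Fin d) (Fin d) ℝ) (q : Fin d → ℤ)
    (x : Fin d → ℤ) : Fin d → ℤ :=
  fun i => min (max ⌊(Dᵀ.mulVec (quantVec d q (D.mulVec (fun j => ((x j : ℝ)))))) i + 1/2⌋ 0) 255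

/-- Euclidean norm of a vector. -/
noncomputable def enorm (d : ℕ) (v : Fin d → ℝ) : ℝ := Real.sqrt (∑ i, v i ^ 2)

/-- The round `⌊z + 1/2⌋` is a nearest integer to `z`. -/
lemma round_closest (z : ℝ) (n : ℤ) :
    |((⌊z + 1/2⌋ : ℤ) : ℝ) - z| ≤ |(n : ℝ) - z| := by
  set r := ⌊z + 1/2⌋ with hr
  have h1 : ((r : ℤ) : ℝ) ≤ z + 1/2 := Int.floor_le _
  have h2 : z + 1/2 < ((r : ℤ) : ℝ) + 1 := Int.lt_floor_add_one _
  have habs : |((r : ℤ) : ℝ) - z| ≤ 1/2 := abs_le.mpr ⟨by linarith, by linarith⟩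
  rcases lt_trichotomy n r with h | h | h
  · have : ((n:ℤ) : ℝ) ≤ ((r:ℤ):ℝ) - 1 := by exact_mod_cast (by omega : n ≤ r - 1)
    have : (1:ℝ)/2 ≤ |(n : ℝ) - z| := by
      rw [abs_sub_comm, le_abs]; left; linarith
    linarith
  · subst h; rfl
  · have : ((r:ℤ) : ℝ) + 1 ≤ ((n:ℤ):ℝ) := by exact_mod_cast (by omega : r + 1 ≤ n)
    have : (1:ℝ)/2 ≤ |(n : ℝ) - z| := by rw [le_abs]; left; linarith
    linarith

/-- Clamped rounding is a nearest point of `[0,255] ∩ ℤ` to `z`. -/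
lemma clamp_round_closest (z : ℝ) (n : ℤ) (h0 : 0 ≤ n) (h255 : n ≤ 255) :
    |((min (max ⌊z + 1/2⌋ 0) 255 : ℤ) : ℝ) - z| ≤ |(n : ℝ) - z| := by
  set r := ⌊z + 1/2⌋ with hr
  have h1 : ((r : ℤ) : ℝ) ≤ z + 1/2 := Int.floor_le _
  have h2 : z + 1/2 < ((r : ℤ) : ℝ) + 1 := Int.lt_floor_add_one _
  have hn0 : (0:ℝ) ≤ (n:ℝ) := by exact_mod_cast h0
  have hn255 : (n:ℝ) ≤ 255 := by exact_mod_cast h255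
  rcases lt_or_ge r 0 with hneg | hpos
  · have hc : min (max r 0) 255 = 0 := by omega
    rw [hc]
    have : ((r:ℤ) : ℝ) ≤ -1 := by exact_mod_cast (by omega : r ≤ -1)
    have hz : z < 0 := by linarith
    rw [abs_of_nonneg (by push_cast; linarith), abs_of_nonneg (by linarith)]
    push_cast; linarith
  · rcases le_or_gt r 255 with hle | hgt
    · have hc : min (max r 0) 255 = r := by omega
      rw [hc]; exact round_closest z n
    · have hc : min (max r 0) 255 = 255 := by omega
      rw [hc]
      have : ((256:ℤ) : ℝ) ≤ ((r:ℤ):ℝ) := by exact_mod_cast (by omega : (256:ℤ) ≤ r)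
      have hz : (255:ℝ) < z := by push_cast at this; linarith
      rw [abs_of_nonpos (by push_cast; linarith), abs_of_nonpos (by linarith)]
      push_cast; linarith

/-- An orthogonal matrix preserves the Euclidean norm. -/
lemma enorm_mulVec (d : ℕ) (D : Matrix (Fin d) (Fin d) ℝ) (hD : Dᵀ * D = 1)
    (v : Fin d → ℝ) : enorm d (D.mulVec v) = enorm d v := by
  unfold _root_.enorm
  congr 1
  have h : D.mulVec v ⬝ᵥ D.mulVec v = v ⬝ᵥ v := by
    rw [Matrix.dotProduct_mulVec, ← Matrix.mulVec_transpose, Matrix.mulVec_mulVec, hD,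
      Matrix.one_mulVec]
  simpa [dotProduct, pow_two] using h

/-- The rounding/truncation error of the IDCT of the quantized block does not exceed the
quantization error: `η_{t+1} ≤ ε_t`. -/
theorem eta_le_eps (d : ℕ) (D : Matrix (Fin d) (Fin d) ℝ) (hD : Dᵀ * D = 1)
    (q : Fin d → ℤ) (hq : ∀ i, 0 < q i) (xt : Fin d → ℤ)
    (hxt : ∀ i, 0 ≤ xt i ∧ xt i ≤ 255) (xt1 : Fin d → ℤ) (hstep : xt1 = jpegT d D q xt) :
    enorm d (D.mulVec (fun j => ((xt1 j : ℝ))) - quantVec d q (D.mulVec (fun j => ((xt j : ℝ)))))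
      ≤ enorm d (D.mulVec (fun j => ((xt j : ℝ))) -
          quantVec d q (D.mulVec (fun j => ((xt j : ℝ))))) := by
  set y := quantVec d q (D.mulVec (fun j => ((xt j : ℝ)))) with hy
  set z := Dᵀ.mulVec y with hz
  have hDDT : D * Dᵀ = 1 := mul_eq_one_comm.mpr hD
  have hDz : D.mulVec z = y := by
    rw [hz, Matrix.mulVec_mulVec, hDDT, Matrix.one_mulVec]
  have key : ∀ (x : Fin d → ℤ), D.mulVec (fun j => ((x j : ℝ))) - y
      = D.mulVec ((fun j => ((x j : ℝ))) - z) := by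
    intro x
    rw [Matrix.mulVec_sub, hDz]
  rw [key xt1, key xt, enorm_mulVec d D hD, enorm_mulVec d D hD]
  unfold _root_.enorm
  apply Real.sqrt_le_sqrt
  apply Finset.sum_le_sum
  intro i _
  have hx1 : xt1 i = min (max ⌊z i + 1/2⌋ 0) 255 := by rw [hstep]; rfl
  have := clamp_round_closest (z i) (xt i) (hxt i).1 (hxt i).2
  rw [← hx1] at this
  calc ((fun j => ((xt1 j : ℝ))) - z) i ^ 2 = |((xt1 i : ℝ)) - z i| ^ 2 := by
        rw [sq_abs]; rfl
    _ ≤ |((xt i : ℝ)) - z i| ^ 2 := by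
        apply pow_le_pow_left₀ (abs_nonneg _) this
    _ = ((fun j => ((xt j : ℝ))) - z) i ^ 2 := by rw [sq_abs]; rfl
end

section
/- With the JPEG transform T as above, the sequence ε₀ ≥ η₁ ≥ ε₁ ≥ η₂ ≥ ⋯ ≥ 0 is non-increasing, where ε_t = ‖Dx_t - [Dx_t]_q‖ and η_{t+1} = ‖Dx_{t+1} - [Dx_t]_q‖ for the orbit x_{t+1} = T(x_t). -/
open Matrix

/-- Quantization error `ε_t = ‖Dx_t - [Dx_t]_q‖` of the orbit. -/
noncomputable def eps (d : ℕ) (D : Matrix (Fin d) (Fin d) ℝ) (q : Fin d → ℤ)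
    (x : ℕ → Fin d → ℤ) (t : ℕ) : ℝ :=
  enorm d (D.mulVec (fun j => ((x t j : ℝ))) - quantVec d q (D.mulVec (fun j => ((x t j : ℝ)))))

/-- Rounding/truncation error `η_{t+1} = ‖Dx_{t+1} - [Dx_t]_q‖` of the orbit. -/
noncomputable def eta (d : ℕ) (D : Matrix (Fin d) (Fin d) ℝ) (q : Fin d → ℤ)
    (x : ℕ → Fin d → ℤ) (t : ℕ) : ℝ :=
  enorm d (D.mulVec (fun j => ((x (t + 1) j : ℝ))) -
    quantVec d q (D.mulVec (fun j => ((x t j : ℝ)))))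


lemma round_nearest (z : ℝ) (n : ℤ) : |z - (round z : ℝ)| ≤ |z - (n : ℝ)| := by
  by_cases h : n = round z
  · rw [h]
  · have h1 : (1 : ℝ) ≤ |(n : ℝ) - (round z : ℝ)| := by
      have hne : n - round z ≠ 0 := sub_ne_zero.mpr h
      have := Int.one_le_abs hne
      exact_mod_cast this
    have h2 : |z - (round z : ℝ)| ≤ 1/2 := abs_sub_round z
    have h3 : |(n : ℝ) - (round z : ℝ)| ≤ |(n:ℝ) - z| + |z - (round z : ℝ)| :=
      abs_sub_le _ _ _
    have h4 : |z - (n:ℝ)| = |(n:ℝ) - z| := abs_sub_comm _ _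
    linarith

lemma clamp_round_nearest (z : ℝ) (m : ℤ) (h0 : 0 ≤ m) (h1 : m ≤ 255) :
    |((min (max ⌊z + 1/2⌋ 0) 255 : ℤ) : ℝ) - z| ≤ |(m : ℝ) - z| := by
  rw [← round_eq]
  have hm0 : (0:ℝ) ≤ (m:ℝ) := by exact_mod_cast h0
  have hm1 : (m:ℝ) ≤ 255 := by exact_mod_cast h1
  have habs := abs_sub_round z
  have hlo : z - (round z : ℝ) ≤ 1/2 := (abs_le.mp habs).2
  have hhi : -(1/2) ≤ z - (round z : ℝ) := (abs_le.mp habs).1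
  rcases lt_or_ge (round z) 0 with hr | hr
  · have hc : min (max (round z) 0) 255 = 0 := by omega
    have hrz : (round z : ℝ) ≤ -1 := by exact_mod_cast (by omega : round z ≤ -1)
    have hz : z ≤ -(1/2) := by linarith
    rw [hc]
    rw [Int.cast_zero, zero_sub, abs_neg, abs_of_nonpos (by linarith),
      abs_of_nonneg (by linarith)]
    linarith
  · rcases le_or_gt (round z) 255 with hr2 | hr2
    · have hc : min (max (round z) 0) 255 = round z := by omega
      rw [hc, abs_sub_comm, abs_sub_comm (m:ℝ)]
      exact round_nearest z m
    · have hc : min (max (round z) 0) 255 = 255 := by omega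
      have hrz : (256:ℝ) ≤ (round z : ℝ) := by exact_mod_cast (by omega : (256:ℤ) ≤ round z)
      have hz : (255:ℝ) + 1/2 ≤ z := by linarith
      rw [hc]
      rw [abs_of_nonpos (by push_cast; linarith), abs_of_nonpos (by linarith)]
      push_cast
      linarith

lemma quant_nearest (y c : ℝ) (hc : 0 < c) (m : ℤ) :
    |y - c * (round (y / c) : ℝ)| ≤ |y - c * (m : ℝ)| := by
  have hc' : c ≠ 0 := ne_of_gt hc
  have h1 : y - c * (round (y/c) : ℝ) = c * (y/c - (round (y/c) : ℝ)) := by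
    field_simp
  have h2 : y - c * (m:ℝ) = c * (y/c - (m:ℝ)) := by field_simp
  rw [h1, h2, abs_mul, abs_mul]
  exact mul_le_mul_of_nonneg_left (round_nearest _ m) (abs_nonneg c)

lemma enorm_le (d : ℕ) (a b : Fin d → ℝ) (h : ∀ i, |a i| ≤ |b i|) :
    enorm d a ≤ enorm d b := by
  apply Real.sqrt_le_sqrt
  apply Finset.sum_le_sum
  intro i _
  calc a i ^ 2 = |a i| ^ 2 := (sq_abs _).symm
    _ ≤ |b i| ^ 2 := pow_le_pow_left₀ (abs_nonneg _) (h i) 2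
    _ = b i ^ 2 := sq_abs _

/-- Along the JPEG orbit, `ε₀ ≥ η₁ ≥ ε₁ ≥ η₂ ≥ ⋯ ≥ 0` is a non-increasing sequence. -/
theorem jpeg_errors_nonincreasing (d : ℕ) (D : Matrix (Fin d) (Fin d) ℝ) (hD : Dᵀ * D = 1)
    (q : Fin d → ℤ) (hq : ∀ i, 0 < q i) (x : ℕ → Fin d → ℤ)
    (hx0 : ∀ i, 0 ≤ x 0 i ∧ x 0 i ≤ 255) (horbit : ∀ t, x (t + 1) = jpegT d D q (x t)) :
    ∀ t, eta d D q x t ≤ eps d D q x t ∧ eps d D q x (t + 1) ≤ eta d D q x t ∧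
      0 ≤ eta d D q x t ∧ 0 ≤ eps d D q x t := by
  have hDDt : D * Dᵀ = 1 := mul_eq_one_comm.mp hD
  have bound : ∀ s i, 0 ≤ x s i ∧ x s i ≤ 255 := by
    intro s
    induction s with
    | zero => exact hx0
    | succ n ih =>
      intro i
      rw [horbit]
      unfold jpegT
      constructor <;> omega
  intro t
  set yq := quantVec d q (D.mulVec fun j => ((x t j : ℝ))) with hyqdef
  set z := Dᵀ.mulVec yq with hzdef
  have hyq : D.mulVec z = yq := by
    rw [hzdef, Matrix.mulVec_mulVec, hDDt, Matrix.one_mulVec]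
  have heta : eta d D q x t = enorm d ((fun j => ((x (t+1) j : ℝ))) - z) := by
    unfold eta
    rw [← hyqdef, ← hyq, ← Matrix.mulVec_sub, enorm_mulVec d D hD]
  have heps : eps d D q x t = enorm d ((fun j => ((x t j : ℝ))) - z) := by
    unfold eps
    rw [← hyqdef, ← hyq, ← Matrix.mulVec_sub, enorm_mulVec d D hD]
  refine ⟨?_, ?_, Real.sqrt_nonneg _, Real.sqrt_nonneg _⟩
  · rw [heta, heps]
    apply enorm_le
    intro i
    have hx1 : x (t+1) i = min (max ⌊z i + 1/2⌋ 0) 255 := by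
      rw [horbit]; rfl
    show |(x (t+1) i : ℝ) - z i| ≤ |(x t i : ℝ) - z i|
    rw [hx1]
    exact clamp_round_nearest (z i) (x t i) (bound t i).1 (bound t i).2
  · unfold eps eta
    rw [← hyqdef]
    apply enorm_le
    intro i
    set w := D.mulVec (fun j => ((x (t+1) j : ℝ)))
    show |w i - quantVec d q w i| ≤ |w i - yq i|
    have hqi : (0:ℝ) < (q i : ℝ) := by exact_mod_cast hq i
    have h1 : quantVec d q w i = (q i : ℝ) * ((round (w i / (q i:ℝ)) : ℤ) : ℝ) := by
      unfold quantVec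
      rw [round_eq]
    rw [h1, hyqdef]
    exact quant_nearest (w i) (q i : ℝ) hqi _
end
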